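/- arXiv:1106.1245 — 4 statements merged into one kernel-verified Lean document; each statement's English description precedes it below -/
import Mathlib

section
/- Let λ ∈ ℝ with λ ≥ 1, let x : ℕ → ℝ³ be a λ-progression, and let f : ℝ³ → ℝ be a continuous linear functional with f(x(1) − x(0)) > 0. Then for every bound B ∈ ℝ there exists n with f(x(n)) > B; in particular the progression eventually leaves every half-space of the form {y : f(y) ≤ B}. (Correctness of the infinity test in the case λ ≥ 1.) -/
/-- If `λ ≥ 1`, `x` is a `λ`-progression, and `f` is a continuous linear
functional with `f (x 1 - x 0) > 0`, then for every bound `B` there is `n` with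
`f (x n) > B`: the progression eventually leaves every half-space `{y | f y ≤ B}`. -/
theorem lambda_progression_leaves_halfspace (l : ℝ) (hl : 1 ≤ l)
    (x : ℕ → EuclideanSpace ℝ (Fin 3))
    (hx : ∀ n : ℕ, x (n + 2) - x (n + 1) = l • (x (n + 1) - x n))
    (f : EuclideanSpace ℝ (Fin 3) →L[ℝ] ℝ) (hf : f (x 1 - x 0) > 0) :
    ∀ B : ℝ, ∃ n : ℕ, f (x n) > B := by
  set c := f (x 1 - x 0) with hc
  have hstep : ∀ n : ℕ, c ≤ f (x (n + 1)) - f (x n) := by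
    intro n
    induction n with
    | zero => simp [hc, map_sub]
    | succ k ih =>
      have h := hx k
      have : f (x (k + 2)) - f (x (k + 1)) = l * (f (x (k + 1)) - f (x k)) := by
        rw [← map_sub, ← map_sub, h, map_smul]; rfl
      rw [this]
      calc c ≤ f (x (k + 1)) - f (x k) := ih
        _ = 1 * (f (x (k + 1)) - f (x k)) := by ring
        _ ≤ l * (f (x (k + 1)) - f (x k)) := by
            apply mul_le_mul_of_nonneg_right hl
            linarith [hf]
  have hlin : ∀ n : ℕ, f (x 0) + n * c ≤ f (x n) := by
    intro n
    induction n with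
    | zero => simp
    | succ k ih =>
      have := hstep k
      push_cast
      push_cast at ih
      linarith
  intro B
  obtain ⟨n, hn⟩ := exists_nat_gt ((B - f (x 0)) / c)
  refine ⟨n, ?_⟩
  have := hlin n
  have h2 : B - f (x 0) < n * c := by
    rw [div_lt_iff₀ hf] at hn; linarith
  linarith
end

section
/- Let λ ∈ ℝ with 0 ≤ λ < 1, let x : ℕ → ℝ³ be a λ-progression, let f : ℝ³ → ℝ be a continuous linear functional and B ∈ ℝ. If f(x(0)) ≤ B and f(x∞) ≤ B, where x∞ = x(0) + (1/(1 − λ)) • (x(1) − x(0)) is the convergence point, then f(x(n)) ≤ B for every n; i.e. the progression never leaves the half-space {y : f(y) ≤ B}. (Correctness of the infinity test: if the convergence point lies before every intersection of the trace with the boundary, the polyhedron is never abandoned.) -/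
/-- If `0 ≤ λ < 1`, `x` is a `λ`-progression, `f` is a continuous linear
functional and `B` a real number with `f (x 0) ≤ B` and `f x∞ ≤ B` for the convergence
point `x∞ = x 0 + (1/(1 - λ)) • (x 1 - x 0)`, then `f (x n) ≤ B` for every `n`:
the progression never leaves the half-space `{y | f y ≤ B}`. -/
theorem lambda_progression_stays_in_halfspace (l : ℝ) (hl0 : 0 ≤ l) (hl1 : l < 1)
    (x : ℕ → EuclideanSpace ℝ (Fin 3))
    (hx : ∀ n : ℕ, x (n + 2) - x (n + 1) = l • (x (n + 1) - x n))
    (f : EuclideanSpace ℝ (Fin 3) →L[ℝ] ℝ) (B : ℝ)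
    (h0 : f (x 0) ≤ B)
    (hinf : f (x 0 + (1 / (1 - l)) • (x 1 - x 0)) ≤ B) :
    ∀ n : ℕ, f (x n) ≤ B := by
  have h1l : (0:ℝ) < 1 - l := by linarith
  set d : ℝ := f (x 1) - f (x 0) with hd
  have hinf' : f (x 0) + d / (1 - l) ≤ B := by
    have : f (x 0 + (1 / (1 - l)) • (x 1 - x 0))
        = f (x 0) + d / (1 - l) := by
      rw [map_add, map_smul, map_sub]
      simp [hd]
      ring
    linarith [hinf, this.symm.le]
  -- step differences
  have hstep : ∀ n : ℕ, f (x (n + 1)) - f (x n) = l ^ n * d := by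
    intro n
    induction n with
    | zero => simp [hd]
    | succ n ih =>
      have := hx n
      have h2 : f (x (n + 2)) - f (x (n + 1)) = l * (f (x (n + 1)) - f (x n)) := by
        calc f (x (n + 2)) - f (x (n + 1)) = f (x (n + 2) - x (n + 1)) := by
              rw [map_sub]
          _ = f (l • (x (n + 1) - x n)) := by rw [this]
          _ = l * (f (x (n + 1)) - f (x n)) := by rw [map_smul, map_sub]; rfl
      rw [show n + 1 + 1 = n + 2 from rfl, h2, ih]
      ring
  have hval : ∀ n : ℕ, f (x n) = f (x 0) + d * ((1 - l ^ n) / (1 - l)) := by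
    intro n
    induction n with
    | zero => simp
    | succ n ih =>
      have := hstep n
      have : f (x (n + 1)) = f (x n) + l ^ n * d := by linarith
      rw [this, ih]
      field_simp
      ring
  intro n
  rw [hval n]
  have hpow : 0 ≤ l ^ n := pow_nonneg hl0 n
  have hpow1 : l ^ n ≤ 1 := pow_le_one₀ hl0 hl1.le
  have hc0 : 0 ≤ (1 - l ^ n) / (1 - l) := div_nonneg (by linarith) h1l.le
  have hc1 : (1 - l ^ n) / (1 - l) ≤ 1 / (1 - l) :=
    by gcongr; linarith
  rcases le_or_gt 0 d with hdpos | hdneg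
  · have : d * ((1 - l ^ n) / (1 - l)) ≤ d * (1 / (1 - l)) :=
      mul_le_mul_of_nonneg_left hc1 hdpos
    have hdd : d * (1 / (1 - l)) = d / (1 - l) := by ring
    linarith [hinf']
  · have : d * ((1 - l ^ n) / (1 - l)) ≤ 0 :=
      mul_nonpos_of_nonpos_of_nonneg hdneg.le hc0
    linarith
end

section
/- Let λ ∈ ℝ with 0 < λ < 1 and let t ∈ ℝ with t ≥ 0 and t·(1 − λ) < 1. Set n = ⌊log(1 − t·(1 − λ)) / log λ⌋ (a natural number). Then (1 − λ^n)/(1 − λ) ≤ t < (1 − λ^{n+1})/(1 − λ); i.e. n is the largest number of cycle iterations whose accumulated parameter (1 − λ^n)/(1 − λ) does not exceed t. (Correctness of the exit-point computation in Algorithm 3: n is the number of cycle iterations fully contained in the polyhedron before the trace parameter t is exceeded.) -/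
/-- For `0 < λ < 1` and `t ≥ 0` with `t·(1-λ) < 1`, the natural number
`n = ⌊log (1 - t·(1-λ)) / log λ⌋` satisfies
`(1 - λ^n)/(1 - λ) ≤ t < (1 - λ^(n+1))/(1 - λ)`: it is the largest number of cycle
iterations whose accumulated parameter does not exceed `t`. -/
theorem exit_point_iteration_count (l t : ℝ) (hl0 : 0 < l) (hl1 : l < 1)
    (ht0 : 0 ≤ t) (ht1 : t * (1 - l) < 1) :
    (1 - l ^ ⌊Real.log (1 - t * (1 - l)) / Real.log l⌋₊) / (1 - l) ≤ t ∧
      t < (1 - l ^ (⌊Real.log (1 - t * (1 - l)) / Real.log l⌋₊ + 1)) / (1 - l) := by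
  set u : ℝ := 1 - t * (1 - l) with hu
  have h1l : 0 < 1 - l := by linarith
  have hu0 : 0 < u := by linarith
  have hu1 : u ≤ 1 := by nlinarith
  have hlogl : Real.log l < 0 := Real.log_neg hl0 hl1
  have hlogu : Real.log u ≤ 0 := Real.log_nonpos hu0.le hu1
  set n : ℕ := ⌊Real.log u / Real.log l⌋₊ with hn
  have hr0 : 0 ≤ Real.log u / Real.log l := div_nonneg_of_nonpos hlogu hlogl.le
  have hfl : (n : ℝ) ≤ Real.log u / Real.log l := Nat.floor_le hr0
  have hfu : Real.log u / Real.log l < n + 1 := Nat.lt_floor_add_one _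
  -- u ≤ l ^ n
  have h1 : u ≤ l ^ n := by
    have : Real.log u ≤ (n : ℝ) * Real.log l := by
      have hc : Real.log u / Real.log l * Real.log l = Real.log u :=
        div_mul_cancel₀ _ hlogl.ne
      nlinarith [mul_le_mul_of_nonpos_right hfl hlogl.le]
    calc u = Real.exp (Real.log u) := (Real.exp_log hu0).symm
      _ ≤ Real.exp ((n : ℝ) * Real.log l) := Real.exp_le_exp.mpr this
      _ = l ^ n := by rw [← Real.log_pow, Real.exp_log (pow_pos hl0 n)]
  -- l ^ (n+1) < u
  have h2 : l ^ (n + 1) < u := by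
    have hlt : ((n : ℝ) + 1) * Real.log l < Real.log u := by
      have hc : Real.log u / Real.log l * Real.log l = Real.log u :=
        div_mul_cancel₀ _ hlogl.ne
      nlinarith [mul_lt_mul_of_neg_right hfu hlogl]
    calc l ^ (n + 1) = Real.exp (((n : ℝ) + 1) * Real.log l) := by
          rw [show ((n : ℝ) + 1) = ((n + 1 : ℕ) : ℝ) by push_cast; ring,
            ← Real.log_pow, Real.exp_log (pow_pos hl0 _)]
      _ < Real.exp (Real.log u) := Real.exp_lt_exp.mpr hlt
      _ = u := Real.exp_log hu0
  constructor
  · rw [div_le_iff₀ h1l]; nlinarith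
  · rw [lt_div_iff₀ h1l]; nlinarith
end

section
/- Let g : ℝ³ →ᵃ[ℝ] ℝ³ be an affine map and define the orbit x(n) = g^[n](x₀). If x(0) ≠ x(1) and the three consecutive points x(0), x(1), x(2) are collinear, then there exists λ ∈ ℝ such that the linear part of g maps x(1) − x(0) to λ • (x(1) − x(0)), the whole orbit satisfies x(n+2) − x(n+1) = λ • (x(n+1) − x(n)) for all n, and all orbit points x(n) lie on the line through x(0) and x(1). (Abstract form of Lemma 2: if three consecutive intersection points of a cycle with a boundary element lie on a straight line, the cycle is a λ-cycle.) -/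
/-!
Collinearity of `x₀, g x₀, g (g x₀)` with `x₀ ≠ g x₀` puts `g (g x₀)` on the line `L` through
`x₀` and `g x₀`. Hence `g` maps `L = line[x₀, g x₀]` into `line[g x₀, g (g x₀)] ⊆ L`, so the whole
orbit stays in `L`; and `g (g x₀) - g x₀ = λ • (g x₀ - x₀)` says that the step `g x₀ - x₀` is an
eigenvector of the linear part, which propagates the ratio `λ` along the orbit, since consecutive
orbit differences are images of `g x₀ - x₀` under powers of the linear part.
-/

open Set

namespace AffineMap

variable {k V P : Type*} [Ring k] [AddCommGroup V] [Module k V] [AddTorsor V P]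
  (f : P →ᵃ[k] P) (x : P)

theorem iterate_succ_vsub_iterate (n : ℕ) :
    f^[n + 1] x -ᵥ f^[n] x = f.linear^[n] (f x -ᵥ x) := by
  induction n with
  | zero => simp
  | succ n ih =>
    rw [Function.iterate_succ_apply' f.linear, ← ih, f.linearMap_vsub,
      ← Function.iterate_succ_apply' f, ← Function.iterate_succ_apply' f]

variable {f x}

theorem iterate_succ_vsub_iterate_of_linear_eq_smul {l : k}
    (h : f.linear (f x -ᵥ x) = l • (f x -ᵥ x)) (n : ℕ) :
    f^[n + 1] x -ᵥ f^[n] x = l ^ n • (f x -ᵥ x) := by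
  rw [iterate_succ_vsub_iterate]
  induction n with
  | zero => simp
  | succ n ih => rw [Function.iterate_succ_apply', ih, map_smul, h, smul_smul, pow_succ]

theorem iterate_add_two_vsub_eq_smul_of_linear_eq_smul {l : k}
    (h : f.linear (f x -ᵥ x) = l • (f x -ᵥ x)) (n : ℕ) :
    f^[n + 2] x -ᵥ f^[n + 1] x = l • (f^[n + 1] x -ᵥ f^[n] x) := by
  rw [iterate_succ_vsub_iterate_of_linear_eq_smul h, iterate_succ_vsub_iterate_of_linear_eq_smul h,
    pow_succ', mul_smul]

theorem mapsTo_affineSpan_pair (h : f (f x) ∈ line[k, x, f x]) :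
    MapsTo f line[k, x, f x] line[k, x, f x] := by
  have hle : (line[k, x, f x]).map f ≤ line[k, x, f x] := by
    rw [AffineSubspace.map_span, image_pair, affineSpan_le]
    exact insert_subset (right_mem_affineSpan_pair k x (f x)) (singleton_subset_iff.2 h)
  exact fun p hp => hle (AffineSubspace.mem_map_of_mem f hp)

theorem iterate_mem_affineSpan_pair (h : f (f x) ∈ line[k, x, f x]) (n : ℕ) :
    f^[n] x ∈ line[k, x, f x] :=
  (mapsTo_affineSpan_pair h).iterate n (left_mem_affineSpan_pair k x (f x))

end AffineMap

theorem exists_vsub_eq_smul_of_mem_affineSpan_pair {k V P : Type*} [Ring k] [AddCommGroup V]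
    [Module k V] [AddTorsor V P] {p₁ p₂ q₁ q₂ : P}
    (hq₁ : q₁ ∈ line[k, p₁, p₂]) (hq₂ : q₂ ∈ line[k, p₁, p₂]) :
    ∃ r : k, q₂ -ᵥ q₁ = r • (p₂ -ᵥ p₁) := by
  obtain ⟨r, hr⟩ := mem_vectorSpan_pair_rev.1
    (vsub_mem_vectorSpan_of_mem_affineSpan_of_mem_affineSpan hq₂ hq₁)
  exact ⟨r, hr.symm⟩

/-- If `g : ℝ³ →ᵃ[ℝ] ℝ³` is an affine map, `x n = g^[n] x₀` its orbit
with `x 0 ≠ x 1`, and the three consecutive points `x 0, x 1, x 2` are collinear,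
then there is `λ ∈ ℝ` with `g.linear (x 1 - x 0) = λ • (x 1 - x 0)`, the whole orbit
satisfies `x (n+2) - x (n+1) = λ • (x (n+1) - x n)`, and all orbit points lie on the
line through `x 0` and `x 1`. -/
theorem affine_orbit_collinear_lambda_cycle
    (g : EuclideanSpace ℝ (Fin 3) →ᵃ[ℝ] EuclideanSpace ℝ (Fin 3))
    (x₀ : EuclideanSpace ℝ (Fin 3))
    (hne : g^[0] x₀ ≠ g^[1] x₀)
    (hcol : Collinear ℝ ({g^[0] x₀, g^[1] x₀, g^[2] x₀} :
      Set (EuclideanSpace ℝ (Fin 3)))) :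
    ∃ l : ℝ,
      g.linear (g^[1] x₀ - g^[0] x₀) = l • (g^[1] x₀ - g^[0] x₀) ∧
      (∀ n : ℕ, g^[n + 2] x₀ - g^[n + 1] x₀ = l • (g^[n + 1] x₀ - g^[n] x₀)) ∧
      ∀ n : ℕ, g^[n] x₀ ∈
        affineSpan ℝ ({g^[0] x₀, g^[1] x₀} : Set (EuclideanSpace ℝ (Fin 3))) := by
  have hmem : g (g x₀) ∈ line[ℝ, x₀, g x₀] :=
    hcol.mem_affineSpan_of_mem_of_ne (by simp) (by simp) (by simp) hne
  obtain ⟨l, hl⟩ := exists_vsub_eq_smul_of_mem_affineSpan_pair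
    (right_mem_affineSpan_pair ℝ x₀ (g x₀)) hmem
  have hlin : g.linear (g x₀ -ᵥ x₀) = l • (g x₀ -ᵥ x₀) := by
    rw [g.linearMap_vsub]
    exact hl
  exact ⟨l, hlin, AffineMap.iterate_add_two_vsub_eq_smul_of_linear_eq_smul hlin,
    AffineMap.iterate_mem_affineSpan_pair hmem⟩
end
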